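/- arXiv:2106.02799 — 6 statements merged into one kernel-verified Lean document; each statement's English description precedes it below -/
import Mathlib

section
/- Let c_{m,n}^{a,b} ∈ ℚ[q] denote the coefficient of the monomial x_1^{a_1}···x_m^{a_m} x_{m+1}^{b_1}···x_{m+n}^{b_n} in g_{m,n} = ∏_{s=m+1}^{m+n} ∏_{t=1}^{m} (x_s - q·x_t)^{d-1}, where a ∈ ℕ^m, b ∈ ℕ^n. Then for all positive integers l, m, n and all a ∈ ℕ^l, b ∈ ℕ^m, c ∈ ℕ^n: ∑_{a_1+a_2=a, b_1+b_2=b} c_{l,m}^{a_1,b_1} · c_{l+m,n}^{(a_2,b_2),c} = ∑_{c_1+c_2=c, b_1+b_2=b} c_{l,m+n}^{a,(b_2,c_2)} · c_{m,n}^{b_1,c_1}, where the sums range over all decompositions into nonnegative integer vectors. -/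
/-!
Both sides are the coefficient of `x^{(a,b,c)}` in one polynomial: writing `g'_{m,n}` for
`g_{m,n}` with its variables shifted by `l`, both `g_{l,m} g_{l+m,n}` and `g_{l,m+n} g'_{m,n}`
are the product of `(x_s - q x_t)^{d-1}` over all `t < s` in different blocks of
`[0,l) ∪ [l,l+m) ∪ [l+m,l+m+n)`. Expanding the coefficient of a product `P Q` where `P` only
involves the variables of one block, the exponent of `P` ranges over the vectors below the
target exponent on that block, which yields the two double sums.
-/

open MvPolynomial Finset

noncomputable section

/-- The quantization variable `q` in `ℚ[q]`. -/
def qv : Polynomial ℚ := Polynomial.X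

/-- The kernel polynomial `g_{m,n} = ∏_{s=m+1}^{m+n} ∏_{t=1}^{m} (x_s - q x_t)^{d-1}`,
with variables indexed by `ℕ` (indices `0,…,m-1` for the first group and
`m,…,m+n-1` for the second). -/
def gPoly (d m n : ℕ) : MvPolynomial ℕ (Polynomial ℚ) :=
  ∏ s ∈ Finset.Ico m (m + n), ∏ t ∈ Finset.range m, (X s - C qv * X t) ^ (d - 1)

/-- The exponent vector `x_1^{a_1} ⋯ x_m^{a_m} x_{m+1}^{b_1} ⋯ x_{m+n}^{b_n}`
as a finitely supported function on the variable indices. -/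
def expo {m n : ℕ} (a : Fin m → ℕ) (b : Fin n → ℕ) : ℕ →₀ ℕ :=
  (∑ i : Fin m, Finsupp.single (i : ℕ) (a i)) +
    (∑ j : Fin n, Finsupp.single (m + (j : ℕ)) (b j))

/-- The coefficient `c_{m,n}^{a,b}` of the monomial `x^{(a,b)}` in `g_{m,n}`. -/
def cf (d m n : ℕ) (a : Fin m → ℕ) (b : Fin n → ℕ) : Polynomial ℚ :=
  MvPolynomial.coeff (expo a b) (gPoly d m n)

def block (p : ℕ) {k : ℕ} (x : Fin k → ℕ) : ℕ →₀ ℕ :=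
  ∑ i : Fin k, Finsupp.single (p + i) (x i)

section block

variable {p k : ℕ}

lemma block_apply_add (x : Fin k → ℕ) (i : Fin k) : block p x (p + i) = x i := by
  simp [block, Finsupp.finsetSum_apply, Finsupp.single_apply, Fin.val_inj]

lemma block_apply_of_notMem (x : Fin k → ℕ) {j : ℕ} (hj : j ∉ Ico p (p + k)) :
    block p x j = 0 := by
  simp only [block, Finsupp.finsetSum_apply, Finsupp.single_apply]
  refine Finset.sum_eq_zero fun i _ => if_neg ?_
  simp only [mem_Ico, not_and_or, not_le, not_lt] at hj
  omega

lemma block_injective : Function.Injective (block p : (Fin k → ℕ) → ℕ →₀ ℕ) := fun x y h =>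
  funext fun i => by rw [← block_apply_add x i, h, block_apply_add]

lemma block_add (x y : Fin k → ℕ) : block p (x + y) = block p x + block p y := by
  simp [block, Finsupp.single_add, Finset.sum_add_distrib]

lemma block_append {k' : ℕ} (x : Fin k → ℕ) (y : Fin k' → ℕ) :
    block p (Fin.append x y) = block p x + block (p + k) y := by
  simp [block, Fin.sum_univ_add, add_assoc]

lemma eq_block_of_apply_eq_zero {e : ℕ →₀ ℕ} (he : ∀ j ∉ Ico p (p + k), e j = 0) :
    e = block p (fun i : Fin k => e (p + i)) := by
  ext j
  by_cases hj : j ∈ Ico p (p + k)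
  · obtain ⟨i, rfl⟩ : ∃ i : Fin k, p + i = j :=
      ⟨⟨j - p, by simp at hj; omega⟩, by simp at hj ⊢; omega⟩
    rw [block_apply_add]
  · rw [he j hj, block_apply_of_notMem _ hj]

lemma expo_eq_block {m n : ℕ} (a : Fin m → ℕ) (b : Fin n → ℕ) :
    expo a b = block 0 a + block m b := by
  simp [expo, block]

lemma mapDomain_block (l : ℕ) (x : Fin k → ℕ) :
    Finsupp.mapDomain (l + ·) (block p x) = block (l + p) x := by
  simp [block, Finsupp.mapDomain_finsetSum, Finsupp.mapDomain_single, add_assoc]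

end block

section append

variable {M : Type*} [AddCommMonoid M] {k k' : ℕ}

lemma Fin.append_sub_append (x x' : Fin k → ℕ) (y y' : Fin k' → ℕ) :
    Fin.append x y - Fin.append x' y' = Fin.append (x - x') (y - y') := by
  ext i
  refine Fin.addCases (fun i => ?_) (fun i => ?_) i <;> simp

lemma Fin.append_le_append_iff {x x' : Fin k → ℕ} {y y' : Fin k' → ℕ} :
    Fin.append x y ≤ Fin.append x' y' ↔ x ≤ x' ∧ y ≤ y' := by
  simp only [Pi.le_def, Fin.forall_fin_add, Fin.append_left, Fin.append_right]

lemma sum_Iic_sum_Iic_eq_sum_Iic_append (x : Fin k → ℕ) (y : Fin k' → ℕ)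
    (f : (Fin (k + k') → ℕ) → M) :
    ∑ x₁ ∈ Iic x, ∑ y₁ ∈ Iic y, f (Fin.append x₁ y₁) = ∑ z ∈ Iic (Fin.append x y), f z := by
  rw [← Finset.sum_product']
  refine Finset.sum_equiv (Fin.appendEquiv k k') (fun p => ?_) (fun _ _ => rfl)
  simp [Fin.appendEquiv, Fin.append_le_append_iff]

end append

section product

variable {R : Type*} [CommSemiring R]

lemma eq_zero_of_coeff_ne_zero_of_mem_supported {P : MvPolynomial ℕ R} {s : Set ℕ}
    (hP : P ∈ supported R s) {e : ℕ →₀ ℕ} (he : coeff e P ≠ 0) {j : ℕ} (hj : j ∉ s) :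
    e j = 0 := by
  by_contra hej
  exact hj (mem_supported.mp hP ((mem_vars_iff_mem_support j).mpr ⟨e, mem_support_iff.mpr he,
    Finsupp.mem_support_iff.mpr hej⟩))

lemma coeff_block_add_mul {p k : ℕ} {P : MvPolynomial ℕ R}
    (hP : P ∈ supported R ↑(Ico p (p + k))) (Q : MvPolynomial ℕ R) (y : Fin k → ℕ)
    {F : ℕ →₀ ℕ} (hF : ∀ j ∈ Ico p (p + k), F j = 0) :
    coeff (block p y + F) (P * Q)
      = ∑ x ∈ Iic y, coeff (block p x) P * coeff (block p (y - x) + F) Q := by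
  classical
  have hsplit : ∀ x ≤ y, block p x + (block p (y - x) + F) = block p y + F := fun x hx => by
    rw [← add_assoc, ← block_add, add_tsub_cancel_of_le hx]
  rw [coeff_mul, eq_comm]
  refine Finset.sum_of_injOn (fun x => (block p x, block p (y - x) + F))
    (fun x _ x' _ h => block_injective (congrArg Prod.fst h)) (fun x hx => ?_)
    (fun u hmem hnot => ?_) (fun _ _ => rfl)
  · exact mem_antidiagonal.mpr (hsplit x (mem_Iic.mp hx))
  · -- an exponent `u.1` of `P` lives on the block, so it is `block p x` with `x ≤ y`
    by_contra hne
    have hsum : u.1 + u.2 = block p y + F := mem_antidiagonal.mp hmem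
    set x : Fin k → ℕ := fun i => u.1 (p + i)
    have hu : u.1 = block p x := eq_block_of_apply_eq_zero fun j hj =>
      eq_zero_of_coeff_ne_zero_of_mem_supported hP (left_ne_zero_of_mul hne) hj
    have hx : x ≤ y := fun i => by
      show u.1 (p + i) ≤ y i
      have := congrArg (· (p + (i : ℕ))) hsum
      simp only [Finsupp.add_apply, block_apply_add, hF (p + i) (by simp)] at this
      omega
    refine hnot ⟨x, mem_Iic.mpr hx, Prod.ext hu.symm ?_⟩
    rw [← hsplit x hx, ← hu] at hsum
    exact (add_left_cancel hsum).symm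

end product

def gProd (d : ℕ) (S T : Finset ℕ) : MvPolynomial ℕ (Polynomial ℚ) :=
  ∏ s ∈ S, ∏ t ∈ T, (X s - C qv * X t) ^ (d - 1)

section gProd

variable (d : ℕ)

lemma gPoly_eq_gProd (m n : ℕ) : gPoly d m n = gProd d (Ico m (m + n)) (Ico 0 m) := by
  rw [gPoly, gProd, range_eq_Ico]

lemma gProd_mem_supported {S T : Finset ℕ} {s : Set ℕ} (hS : ↑S ⊆ s) (hT : ↑T ⊆ s) :
    gProd d S T ∈ supported (Polynomial ℚ) s :=
  Subalgebra.prod_mem _ fun _ hi => Subalgebra.prod_mem _ fun _ hj =>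
    Subalgebra.pow_mem _ (Subalgebra.sub_mem _ (X_mem_supported.mpr (hS hi))
      (Subalgebra.mul_mem _ (Subalgebra.algebraMap_mem _ _) (X_mem_supported.mpr (hT hj)))) _

lemma gProd_Ico_mul_gProd_Ico (T : Finset ℕ) {a b c : ℕ} (hab : a ≤ b) (hbc : b ≤ c) :
    gProd d (Ico a b) T * gProd d (Ico b c) T = gProd d (Ico a c) T :=
  prod_Ico_consecutive _ hab hbc

lemma gProd_mul_gProd_Ico_Ico (S : Finset ℕ) {a b c : ℕ} (hab : a ≤ b) (hbc : b ≤ c) :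
    gProd d S (Ico a b) * gProd d S (Ico b c) = gProd d S (Ico a c) := by
  rw [gProd, gProd, gProd, ← prod_mul_distrib]
  exact prod_congr rfl fun _ _ => prod_Ico_consecutive _ hab hbc

lemma rename_gProd (l : ℕ) (S T : Finset ℕ) :
    rename (l + ·) (gProd d S T)
      = gProd d (S.map (addLeftEmbedding l)) (T.map (addLeftEmbedding l)) := by
  simp [gProd, map_prod]

lemma rename_gPoly (l m n : ℕ) :
    rename (l + ·) (gPoly d m n) = gProd d (Ico (l + m) (l + m + n)) (Ico l (l + m)) := by
  rw [gPoly_eq_gProd, rename_gProd, map_add_left_Ico, map_add_left_Ico, add_zero, add_assoc]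

lemma gPoly_mul_gPoly (l m n : ℕ) :
    gPoly d l m * gPoly d (l + m) n = gPoly d l (m + n) * rename (l + ·) (gPoly d m n) := by
  rw [rename_gPoly, gPoly_eq_gProd, gPoly_eq_gProd, gPoly_eq_gProd, ← add_assoc,
    ← gProd_mul_gProd_Ico_Ico d _ (Nat.zero_le l) (Nat.le_add_right l m),
    ← gProd_Ico_mul_gProd_Ico d _ (Nat.le_add_right l m) (Nat.le_add_right (l + m) n)]
  ring

end gProd

lemma coeff_rename_block {R : Type*} [CommSemiring R] (P : MvPolynomial ℕ R) (l p : ℕ) {k : ℕ}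
    (x : Fin k → ℕ) : coeff (block (l + p) x) (rename (l + ·) P) = coeff (block p x) P := by
  rw [← mapDomain_block, coeff_rename_mapDomain _ (add_right_injective l)]

section coefficients

variable (d : ℕ) {l m n : ℕ} (a : Fin l → ℕ) (b : Fin m → ℕ) (c : Fin n → ℕ)

lemma expo_append_left_eq_expo_append_right :
    expo (Fin.append a b) c = expo a (Fin.append b c) := by
  simp only [expo_eq_block, block_append, zero_add, add_assoc]

lemma coeff_gPoly_mul_gPoly :
    coeff (expo (Fin.append a b) c) (gPoly d l m * gPoly d (l + m) n)
      = ∑ a₁ ∈ Iic a, ∑ b₁ ∈ Iic b,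
          cf d l m a₁ b₁ * cf d (l + m) n (Fin.append (a - a₁) (b - b₁)) c := by
  have hP : gPoly d l m ∈ supported (Polynomial ℚ) ↑(Ico 0 (0 + (l + m))) := by
    rw [gPoly_eq_gProd]
    exact gProd_mem_supported d (fun j hj => by simp at hj ⊢; omega) (by simp)
  have hF : ∀ j ∈ Ico 0 (0 + (l + m)), block (l + m) c j = 0 := fun j hj =>
    block_apply_of_notMem _ (by simp_all)
  rw [expo_eq_block, coeff_block_add_mul hP _ _ hF, ← sum_Iic_sum_Iic_eq_sum_Iic_append]
  simp only [cf, expo_eq_block, block_append, zero_add, Fin.append_sub_append]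

lemma coeff_gPoly_mul_rename_gPoly :
    coeff (expo a (Fin.append b c)) (gPoly d l (m + n) * rename (l + ·) (gPoly d m n))
      = ∑ c₁ ∈ Iic c, ∑ b₁ ∈ Iic b,
          cf d l (m + n) a (Fin.append (b - b₁) (c - c₁)) * cf d m n b₁ c₁ := by
  have hP : rename (l + ·) (gPoly d m n) ∈ supported (Polynomial ℚ) ↑(Ico l (l + (m + n))) := by
    rw [rename_gPoly]
    exact gProd_mem_supported d (fun j hj => by simp at hj ⊢; omega)
      (fun j hj => by simp at hj ⊢; omega)
  have hF : ∀ j ∈ Ico l (l + (m + n)), block 0 a j = 0 := fun j hj =>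
    block_apply_of_notMem _ (by simp_all)
  rw [expo_eq_block, add_comm, mul_comm, coeff_block_add_mul hP _ _ hF, sum_comm,
    ← sum_Iic_sum_Iic_eq_sum_Iic_append]
  refine sum_congr rfl fun b₁ _ => sum_congr rfl fun c₁ _ => ?_
  have hcf : coeff (block l (Fin.append b₁ c₁)) (rename (l + ·) (gPoly d m n))
      = cf d m n b₁ c₁ := by
    simpa [cf, expo_eq_block, block_append] using
      coeff_rename_block (gPoly d m n) l 0 (Fin.append b₁ c₁)
  rw [hcf, mul_comm, Fin.append_sub_append, add_comm, ← expo_eq_block]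
  rfl

end coefficients

theorem coefficient_equality_general (d l m n : ℕ) (a : Fin l → ℕ) (b : Fin m → ℕ) (c : Fin n → ℕ) :
    ∑ a₁ ∈ Finset.Iic a, ∑ b₁ ∈ Finset.Iic b,
      cf d l m a₁ b₁ * cf d (l + m) n (Fin.append (a - a₁) (b - b₁)) c
    = ∑ c₁ ∈ Finset.Iic c, ∑ b₁ ∈ Finset.Iic b,
        cf d l (m + n) a (Fin.append (b - b₁) (c - c₁)) * cf d m n b₁ c₁ := by
  rw [← coeff_gPoly_mul_gPoly, gPoly_mul_gPoly, expo_append_left_eq_expo_append_right,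
    coeff_gPoly_mul_rename_gPoly]

/-- Lemma 3.1:
`∑_{a₁+a₂=a, b₁+b₂=b} c_{l,m}^{a₁,b₁} c_{l+m,n}^{(a₂,b₂),c}
 = ∑_{c₁+c₂=c, b₁+b₂=b} c_{l,m+n}^{a,(b₂,c₂)} c_{m,n}^{b₁,c₁}`. -/
theorem coefficient_equality (d l m n : ℕ) (hd : 0 < d) (hl : 0 < l) (hm : 0 < m)
    (hn : 0 < n) (a : Fin l → ℕ) (b : Fin m → ℕ) (c : Fin n → ℕ) :
    ∑ a₁ ∈ Finset.Iic a, ∑ b₁ ∈ Finset.Iic b,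
      cf d l m a₁ b₁ * cf d (l + m) n (Fin.append (a - a₁) (b - b₁)) c
    = ∑ c₁ ∈ Finset.Iic c, ∑ b₁ ∈ Finset.Iic b,
        cf d l (m + n) a (Fin.append (b - b₁) (c - c₁)) * cf d m n b₁ c₁ :=
  coefficient_equality_general d l m n a b c

end
end

section
/- In the algebra 𝔸^d_q(Λ̂), the ℚ[q]-subspace W spanned by all differences μ − σ(μ), where μ ∈ ℕ^m and σ(μ) is any permutation of the entries of μ, is a two-sided ideal: for any basis element w ∈ ℕ^n, both (μ − σ(μ)) * w and w * (μ − σ(μ)) lie in W. -/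
open MvPolynomial Finset

noncomputable section

/-- `Λ̂`, the disjoint union of all `ℕ^n` for `n ≥ 0`. -/
def LambdaHat : Type := Σ n : ℕ, (Fin n → ℕ)

/-- The product of two basis elements of `𝔸^d_q(Λ̂)`:
`μ * ν = ∑_{a,b} c_{m,n}^{a,b} (μ+a, ν+b)`, realised as a sum over the
monomials `e` in the support of `g_{m,n}` with `a i = e i`, `b j = e (m+j)`. -/
def basisMul (d : ℕ) (μ ν : LambdaHat) : LambdaHat →₀ Polynomial ℚ :=
  ∑ e ∈ (gPoly d μ.1 ν.1).support,
    Finsupp.single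
      ⟨μ.1 + ν.1, Fin.append (fun i => μ.2 i + e (i : ℕ)) (fun j => ν.2 j + e (μ.1 + (j : ℕ)))⟩
      (MvPolynomial.coeff e (gPoly d μ.1 ν.1))

/-- The bilinear extension of `basisMul` to `𝔸^d_q(Λ̂)`. -/
def amul (d : ℕ) (f g : LambdaHat →₀ Polynomial ℚ) : LambdaHat →₀ Polynomial ℚ :=
  ∑ μ ∈ f.support, ∑ ν ∈ g.support, (f μ * g ν) • basisMul d μ ν

/-- The `ℚ[q]`-subspace `W` of `𝔸^d_q(Λ̂)` spanned by all differences `μ − σ(μ)`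
with `σ(μ)` a permutation of the entries of `μ`. -/
def Wspan : Submodule (Polynomial ℚ) (LambdaHat →₀ Polynomial ℚ) :=
  Submodule.span (Polynomial ℚ)
    {x | ∃ (m : ℕ) (μ : Fin m → ℕ) (σ : Equiv.Perm (Fin m)),
      x = Finsupp.single (⟨m, μ⟩ : LambdaHat) 1 - Finsupp.single (⟨m, μ ∘ σ⟩ : LambdaHat) 1}

/-!
The structure polynomial `gPoly d m n` is symmetric in the variables of each block
`[0, m)` and `[m, m + n)` separately. Permuting the entries of either factor by `σ` therefore
amounts to renaming the variables of `gPoly` by the corresponding block permutation `τ` of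
`Fin (m + n)`, which permutes its monomials without changing their coefficients. After this
reindexing, `μ * w - σ(μ) * w` is a sum of terms `c • (v - v ∘ τ)`, each in `W`. Bilinearity of
`amul` reduces the theorem to products of basis elements.
-/

theorem MvPolynomial.sum_support_rename_of_injective {R σ τ M : Type*} [CommSemiring R]
    [AddCommMonoid M] {f : σ → τ} (hf : Function.Injective f) (p : MvPolynomial σ R)
    (F : (τ →₀ ℕ) → R → M) :
    ∑ e ∈ (rename f p).support, F e (coeff e (rename f p)) =
      ∑ e ∈ p.support, F (e.mapDomain f) (coeff e p) := by
  classical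
  rw [support_rename_of_injective hf, sum_image (Finsupp.mapDomain_injective hf).injOn]
  simp only [coeff_rename_mapDomain f hf]

theorem Submodule.single_sub_single_mem {α R : Type*} [Ring R] {p : Submodule R (α →₀ R)}
    {a b : α} (h : Finsupp.single a 1 - Finsupp.single b 1 ∈ p) (c : R) :
    Finsupp.single a c - Finsupp.single b c ∈ p := by
  simpa [smul_sub] using p.smul_mem c h

namespace Equiv.Perm

variable {N : ℕ} (τ : Equiv.Perm (Fin N))

theorem viaFintypeEmbedding_valEmbedding_apply_val (k : Fin N) :
    τ.viaFintypeEmbedding Fin.valEmbedding k = τ k :=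
  τ.viaFintypeEmbedding_apply_image Fin.valEmbedding k

theorem viaFintypeEmbedding_valEmbedding_apply_of_le {i : ℕ} (hi : N ≤ i) :
    τ.viaFintypeEmbedding Fin.valEmbedding i = i :=
  τ.viaFintypeEmbedding_apply_notMem_range _ (by simpa using hi)

end Equiv.Perm

section PermCongrSumCongr

variable {m n : ℕ} (σ₁ : Equiv.Perm (Fin m)) (σ₂ : Equiv.Perm (Fin n))

theorem Fin.append_comp_comp {α : Type*} (μ : Fin m → α) (w : Fin n → α) :
    Fin.append (μ ∘ σ₁) (w ∘ σ₂) =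
      Fin.append μ w ∘ finSumFinEquiv.permCongr (σ₁.sumCongr σ₂) := by
  funext k
  refine Fin.addCases (fun i => ?_) (fun j => ?_) k <;> simp [Equiv.permCongr_apply]

theorem val_permCongr_sumCongr_lt_iff (k : Fin (m + n)) :
    (finSumFinEquiv.permCongr (σ₁.sumCongr σ₂) k : ℕ) < m ↔ (k : ℕ) < m := by
  refine Fin.addCases (fun i => ?_) (fun j => ?_) k <;> simp [Equiv.permCongr_apply]

end PermCongrSumCongr

theorem rename_gPoly_of_lt_iff (d m n : ℕ) (τ : Equiv.Perm (Fin (m + n)))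
    (hτ : ∀ k, (τ k : ℕ) < m ↔ (k : ℕ) < m) :
    rename (τ.viaFintypeEmbedding Fin.valEmbedding) (gPoly d m n) = gPoly d m n := by
  set π := τ.viaFintypeEmbedding Fin.valEmbedding
  have hπ : ∀ i, (π i < m ↔ i < m) ∧ (π i < m + n ↔ i < m + n) := by
    intro i
    by_cases hi : i < m + n
    · obtain ⟨k, rfl⟩ : ∃ k : Fin (m + n), (k : ℕ) = i := ⟨⟨i, hi⟩, rfl⟩
      simp [π, Equiv.Perm.viaFintypeEmbedding_valEmbedding_apply_val, hτ]
    · rw [Equiv.Perm.viaFintypeEmbedding_valEmbedding_apply_of_le τ (not_lt.mp hi)]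
      exact ⟨Iff.rfl, Iff.rfl⟩
  simp only [gPoly, map_prod, map_pow, map_sub, map_mul, rename_X, rename_C]
  refine prod_equiv π (fun i => ?_) fun s _ => prod_equiv π (fun i => ?_) fun t _ => rfl
  · simp only [mem_Ico]
    have := hπ i
    omega
  · simp [(hπ i).1]

theorem single_sub_single_comp_mem_Wspan {N : ℕ} (v : Fin N → ℕ) (τ : Equiv.Perm (Fin N))
    (c : Polynomial ℚ) :
    Finsupp.single (α := LambdaHat) ⟨N, v⟩ c - Finsupp.single ⟨N, v ∘ τ⟩ c ∈ Wspan :=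
  Submodule.single_sub_single_mem (Submodule.subset_span ⟨N, v, τ, rfl⟩ : _ ∈ Wspan) c

theorem sum_single_sub_sum_single_comp_mem_Wspan {N : ℕ} (g : MvPolynomial ℕ (Polynomial ℚ))
    (τ : Equiv.Perm (Fin N)) (hg : rename (τ.viaFintypeEmbedding Fin.valEmbedding) g = g)
    (v : Fin N → ℕ) :
    (∑ e ∈ g.support,
        Finsupp.single (α := LambdaHat) ⟨N, v + fun k : Fin N => e k⟩ (coeff e g)) -
      ∑ e ∈ g.support,
        Finsupp.single (α := LambdaHat) ⟨N, v ∘ τ + fun k : Fin N => e k⟩ (coeff e g) ∈ Wspan := by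
  set π := τ.viaFintypeEmbedding Fin.valEmbedding
  have hg_symm : rename π.symm g = g := by
    conv_lhs => rw [← hg]
    rw [rename_rename]
    simp
  have reindex :
      ∑ e ∈ g.support,
          Finsupp.single (α := LambdaHat) ⟨N, v ∘ τ + fun k : Fin N => e k⟩ (coeff e g) =
        ∑ e ∈ g.support,
          Finsupp.single (α := LambdaHat) ⟨N, (v + fun k : Fin N => e k) ∘ τ⟩ (coeff e g) := by
    conv_lhs => rw [← hg_symm]
    rw [MvPolynomial.sum_support_rename_of_injective π.symm.injective]
    refine sum_congr rfl fun e _ => ?_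
    congr 3
    funext k
    simp [Finsupp.mapDomain_equiv_apply, π,
      Equiv.Perm.viaFintypeEmbedding_valEmbedding_apply_val]
  rw [reindex, ← sum_sub_distrib]
  exact Submodule.sum_mem _ fun e _ => single_sub_single_comp_mem_Wspan _ τ _

theorem basisMul_eq_sum (d : ℕ) {m n : ℕ} (μ : Fin m → ℕ) (w : Fin n → ℕ) :
    basisMul d ⟨m, μ⟩ ⟨n, w⟩ = ∑ e ∈ (gPoly d m n).support,
      Finsupp.single (α := LambdaHat) ⟨m + n, Fin.append μ w + fun k : Fin (m + n) => e k⟩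
        (coeff e (gPoly d m n)) := by
  refine sum_congr rfl fun e _ => ?_
  congr 3
  funext k
  refine Fin.addCases (fun i => ?_) (fun j => ?_) k <;> simp

theorem basisMul_sub_basisMul_comp_mem_Wspan (d : ℕ) {m n : ℕ} (μ : Fin m → ℕ)
    (w : Fin n → ℕ) (σ₁ : Equiv.Perm (Fin m)) (σ₂ : Equiv.Perm (Fin n)) :
    basisMul d ⟨m, μ⟩ ⟨n, w⟩ - basisMul d ⟨m, μ ∘ σ₁⟩ ⟨n, w ∘ σ₂⟩ ∈ Wspan := by
  have h := sum_single_sub_sum_single_comp_mem_Wspan (gPoly d m n) _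
    (rename_gPoly_of_lt_iff d m n _ (val_permCongr_sumCongr_lt_iff σ₁ σ₂)) (Fin.append μ w)
  rwa [← Fin.append_comp_comp, ← basisMul_eq_sum, ← basisMul_eq_sum] at h

theorem amul_eq_sum (d : ℕ) (f g : LambdaHat →₀ Polynomial ℚ) :
    amul d f g = f.sum fun μ a => g.sum fun ν b => (a * b) • basisMul d μ ν :=
  rfl

theorem amul_single_single (d : ℕ) (μ ν : LambdaHat) (a b : Polynomial ℚ) :
    amul d (Finsupp.single μ a) (Finsupp.single ν b) = (a * b) • basisMul d μ ν := by
  simp [amul_eq_sum]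

theorem amul_sub_left (d : ℕ) (f₁ f₂ g : LambdaHat →₀ Polynomial ℚ) :
    amul d (f₁ - f₂) g = amul d f₁ g - amul d f₂ g := by
  rw [amul_eq_sum, Finsupp.sum_sub_index]
  · rfl
  · intro μ a₁ a₂
    simp only [sub_mul, sub_smul, Finsupp.sum_sub]

theorem amul_sub_right (d : ℕ) (f g₁ g₂ : LambdaHat →₀ Polynomial ℚ) :
    amul d f (g₁ - g₂) = amul d f g₁ - amul d f g₂ := by
  simp only [amul_eq_sum, ← Finsupp.sum_sub]
  refine Finsupp.sum_congr fun μ _ => Finsupp.sum_sub_index fun ν b₁ b₂ => ?_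
  simp only [mul_sub, sub_smul]

theorem amul_single_sub_single (d : ℕ) (x y z : LambdaHat) :
    amul d (Finsupp.single x 1 - Finsupp.single y 1) (Finsupp.single z 1) =
      basisMul d x z - basisMul d y z := by
  simp [amul_sub_left, amul_single_single]

theorem amul_single_single_sub (d : ℕ) (x y z : LambdaHat) :
    amul d (Finsupp.single z 1) (Finsupp.single x 1 - Finsupp.single y 1) =
      basisMul d z x - basisMul d z y := by
  simp [amul_sub_right, amul_single_single]

theorem Wspan_two_sided_ideal_general (d : ℕ) (m n : ℕ) (μ : Fin m → ℕ)
    (σ : Equiv.Perm (Fin m)) (w : Fin n → ℕ) :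
    amul d (Finsupp.single (⟨m, μ⟩ : LambdaHat) 1 - Finsupp.single (⟨m, μ ∘ σ⟩ : LambdaHat) 1)
        (Finsupp.single (⟨n, w⟩ : LambdaHat) 1) ∈ Wspan ∧
    amul d (Finsupp.single (⟨n, w⟩ : LambdaHat) 1)
        (Finsupp.single (⟨m, μ⟩ : LambdaHat) 1 - Finsupp.single (⟨m, μ ∘ σ⟩ : LambdaHat) 1)
      ∈ Wspan :=
  -- The literals `⟨m, μ⟩` are typed at the Σ-type rather than `LambdaHat`, which defeats
  -- `rw`; transporting along the equations by `congrArg` only needs definitional unfolding.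
  ⟨(congrArg (· ∈ Wspan) (amul_single_sub_single d _ _ _)).mpr
      (basisMul_sub_basisMul_comp_mem_Wspan d μ w σ 1),
    (congrArg (· ∈ Wspan) (amul_single_single_sub d _ _ _)).mpr
      (basisMul_sub_basisMul_comp_mem_Wspan d w μ 1 σ)⟩

/-- `W` is a two-sided ideal of `𝔸^d_q(Λ̂)`: both `(μ − σ(μ)) * w` and
`w * (μ − σ(μ))` lie in `W`. -/
theorem Wspan_two_sided_ideal (d : ℕ) (hd : 0 < d) (m n : ℕ) (μ : Fin m → ℕ)
    (σ : Equiv.Perm (Fin m)) (w : Fin n → ℕ) :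
    amul d (Finsupp.single (⟨m, μ⟩ : LambdaHat) 1 - Finsupp.single (⟨m, μ ∘ σ⟩ : LambdaHat) 1)
        (Finsupp.single (⟨n, w⟩ : LambdaHat) 1) ∈ Wspan ∧
    amul d (Finsupp.single (⟨n, w⟩ : LambdaHat) 1)
        (Finsupp.single (⟨m, μ⟩ : LambdaHat) 1 - Finsupp.single (⟨m, μ ∘ σ⟩ : LambdaHat) 1)
      ∈ Wspan :=
  Wspan_two_sided_ideal_general d m n μ σ w

end
end

section
/- The shuffle-type multiplication on ℋ^d_q = ⊕_{n≥0} ℚ[q][x_1,...,x_n]^{S_n}, given by (f_1 * f_2)(x_1,...,x_{n_1+n_2}) = ∑_{{i_1,...,i_{n_1}}} f_1(x_{i_1},...,x_{i_{n_1}}) f_2(x_{j_1},...,x_{j_{n_2}}) ∏_{l=1}^{n_2} ∏_{t=1}^{n_1} (x_{j_l} − q x_{i_t})^{d−1}, is associative. -/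
open MvPolynomial Finset

noncomputable section

/-- The shuffle product of the quantized cohomological Hall algebra `ℋ^d_q`:
`(f₁ * f₂)(x_1,…,x_{n₁+n₂}) = ∑_I f₁(x_I) f₂(x_J) ∏_{j∈J, i∈I} (x_j − q x_i)^{d−1}`,
where the sum ranges over the `n₁`-element subsets `I` of `{1,…,n₁+n₂}` with
complement `J`, and `f₁(x_I)` denotes `f₁` evaluated at the variables indexed
by `I` (in increasing order). -/
def shuffle (d n₁ n₂ : ℕ) (f₁ : MvPolynomial (Fin n₁) (Polynomial ℚ))
    (f₂ : MvPolynomial (Fin n₂) (Polynomial ℚ)) :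
    MvPolynomial (Fin (n₁ + n₂)) (Polynomial ℚ) :=
  ∑ I ∈ ((Finset.univ : Finset (Fin (n₁ + n₂))).powersetCard n₁).attach,
    have hI : I.1.card = n₁ := (Finset.mem_powersetCard.mp I.2).2
    have hJ : I.1ᶜ.card = n₂ := by
      have h := Finset.card_compl I.1
      rw [hI] at h
      simp only [Fintype.card_fin] at h
      omega
    rename (⇑(I.1.orderEmbOfFin hI)) f₁ * rename (⇑(I.1ᶜ.orderEmbOfFin hJ)) f₂ *
      ∏ j ∈ I.1ᶜ, ∏ i ∈ I.1, (X j - C qv * X i) ^ (d - 1)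

/-- base factor -/
def pf (d : ℕ) {σ : Type*} (j i : σ) : MvPolynomial σ (Polynomial ℚ) :=
  (X j - C qv * X i) ^ (d - 1)

lemma rename_pf {σ τ : Type*} (d : ℕ) (e : σ → τ) (j i : σ) :
    rename e (pf d j i) = pf d (e j) (e i) := by
  simp [pf, map_pow, map_sub, map_mul, rename_X, rename_C]

lemma comp_orderEmbOfFin {α β : Type*} [LinearOrder α] [LinearOrder β] [DecidableEq β]
    (e : α → β) (he : StrictMono e) {t : Finset α} {k : ℕ} (ht : t.card = k) :
    e ∘ (t.orderEmbOfFin ht) = (t.image e).orderEmbOfFin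
      (by rw [card_image_of_injective _ he.injective, ht]) := by
  apply orderEmbOfFin_unique
  · intro x; exact mem_image_of_mem _ (orderEmbOfFin_mem _ _ _)
  · exact he.comp (t.orderEmbOfFin ht).strictMono

lemma image_univ_orderEmbOfFin {α : Type*} [LinearOrder α] [DecidableEq α] [Fintype α] {s : Finset α} {k : ℕ}
    (h : s.card = k) : (univ : Finset (Fin k)).image ⇑(s.orderEmbOfFin h) = s := by
  apply Finset.coe_injective
  rw [coe_image, coe_univ, Set.image_univ, range_orderEmbOfFin]

end

noncomputable section
open Finset MvPolynomial

lemma orderEmbOfFin_congr {α : Type*} [LinearOrder α] {s t : Finset α} {k : ℕ} (hst : s = t)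
    (h : s.card = k) : ⇑(s.orderEmbOfFin h) = ⇑(t.orderEmbOfFin (hst ▸ h)) := by
  subst hst; rfl

lemma rename_orderEmbOfFin_congr {α : Type*} [LinearOrder α] {s t : Finset α} {k : ℕ}
    (hst : s = t) (h : s.card = k) (h' : t.card = k)
    (g : MvPolynomial (Fin k) (Polynomial ℚ)) :
    rename (⇑(s.orderEmbOfFin h)) g = rename (⇑(t.orderEmbOfFin h')) g := by
  subst hst; rfl

set_option maxHeartbeats 1600000 in
lemma rename_shuffle (d n m N : ℕ) (e : Fin (n + m) → Fin N) (he : StrictMono e)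
    (S : Finset (Fin N)) (hS : (univ : Finset (Fin (n + m))).image e = S)
    (f : MvPolynomial (Fin n) (Polynomial ℚ)) (g : MvPolynomial (Fin m) (Polynomial ℚ)) :
    rename e (shuffle d n m f g)
      = ∑ A ∈ (S.powersetCard n).attach,
          have hA : A.1.card = n := (mem_powersetCard.mp A.2).2
          have hB : (S \ A.1).card = m := by
            have hsub : A.1 ⊆ S := (mem_powersetCard.mp A.2).1
            have hScard : S.card = n + m := by
              rw [← hS, card_image_of_injective _ he.injective]; simp
            rw [card_sdiff_of_subset hsub, hA, hScard]; omega
          rename (⇑(A.1.orderEmbOfFin hA)) f * rename (⇑((S \ A.1).orderEmbOfFin hB)) g *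
            ∏ j ∈ S \ A.1, ∏ i ∈ A.1, pf d j i := by
  subst hS
  unfold shuffle
  rw [map_sum]
  have hrange : ↑((univ : Finset (Fin (n + m))).image e) = Set.range e := by
    rw [coe_image, coe_univ, Set.image_univ]
  have key1 : ∀ A : Finset (Fin N), A ⊆ univ.image e →
      (A.preimage e he.injective.injOn).image e = A := by
    intro A hA
    apply Finset.coe_injective
    rw [coe_image, coe_preimage]
    exact Set.image_preimage_eq_of_subset (le_trans (coe_subset.mpr hA) hrange.le)
  have hmem1 : ∀ I : {x // x ∈ powersetCard n (univ : Finset (Fin (n + m)))},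
      I.1.image e ∈ (univ.image e).powersetCard n := by
    intro I
    rw [mem_powersetCard]
    exact ⟨image_subset_image (subset_univ _),
      by rw [card_image_of_injective _ he.injective, (mem_powersetCard.mp I.2).2]⟩
  have hmem2 : ∀ A : {x // x ∈ (((univ : Finset (Fin (n + m))).image e).powersetCard n)},
      A.1.preimage e he.injective.injOn ∈ powersetCard n (univ : Finset (Fin (n + m))) := by
    intro A
    rw [mem_powersetCard]
    refine ⟨subset_univ _, ?_⟩
    have h1 := key1 A.1 (mem_powersetCard.mp A.2).1
    have h2 := card_image_of_injective (A.1.preimage e he.injective.injOn) he.injective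
    rw [h1] at h2
    rw [← h2, (mem_powersetCard.mp A.2).2]
  refine Finset.sum_bij' (i := fun I _ => ⟨I.1.image e, hmem1 I⟩)
    (j := fun A _ => ⟨A.1.preimage e he.injective.injOn, hmem2 A⟩)
    (fun a ha => mem_attach _ _) (fun a ha => mem_attach _ _) ?_ ?_ ?_
  · intro a ha
    apply Subtype.ext
    apply Finset.coe_injective
    simp only [coe_preimage, coe_image]
    exact Set.preimage_image_eq _ he.injective
  · intro a ha
    exact Subtype.ext (key1 a.1 (mem_powersetCard.mp a.2).1)
  · intro I hI
    dsimp only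
    have hIc : ((I.1)ᶜ).image e = univ.image e \ I.1.image e := by
      rw [compl_eq_univ_sdiff, Finset.image_sdiff _ _ he.injective]
    rw [map_mul, map_mul, rename_rename, rename_rename,
      comp_orderEmbOfFin e he, comp_orderEmbOfFin e he]
    congr 1
    · congr 1
      exact rename_orderEmbOfFin_congr hIc _ _ g
    rw [map_prod]
    rw [← hIc, Finset.prod_image (fun x _ y _ h => he.injective h)]
    apply Finset.prod_congr rfl
    intro j _
    rw [map_prod, Finset.prod_image (fun x _ y _ h => he.injective h)]
    apply Finset.prod_congr rfl
    intro i _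
    exact rename_pf d e j i

end

noncomputable section
open Finset MvPolynomial

set_option maxHeartbeats 1600000 in
lemma lhs_expand (d n₁ n₂ n₃ : ℕ)
    (f₁ : MvPolynomial (Fin n₁) (Polynomial ℚ)) (f₂ : MvPolynomial (Fin n₂) (Polynomial ℚ))
    (f₃ : MvPolynomial (Fin n₃) (Polynomial ℚ)) :
    shuffle d (n₁ + n₂) n₃ (shuffle d n₁ n₂ f₁ f₂) f₃
      = ∑ K ∈ ((univ : Finset (Fin (n₁ + n₂ + n₃))).powersetCard (n₁ + n₂)).attach,
          ∑ A ∈ (K.1.powersetCard n₁).attach,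
            have hK : K.1.card = n₁ + n₂ := (mem_powersetCard.mp K.2).2
            have hA : A.1.card = n₁ := (mem_powersetCard.mp A.2).2
            have hB : (K.1 \ A.1).card = n₂ := by
              rw [card_sdiff_of_subset (mem_powersetCard.mp A.2).1, hK, hA]; omega
            have hC : (K.1ᶜ).card = n₃ := by
              have h := Finset.card_compl K.1
              rw [hK] at h
              simp only [Fintype.card_fin] at h
              omega
            rename (⇑(A.1.orderEmbOfFin hA)) f₁ * rename (⇑((K.1 \ A.1).orderEmbOfFin hB)) f₂ *
                (∏ j ∈ K.1 \ A.1, ∏ i ∈ A.1, pf d j i) *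
              rename (⇑((K.1ᶜ).orderEmbOfFin hC)) f₃ *
              ∏ j ∈ K.1ᶜ, ∏ i ∈ K.1, pf d j i := by
  conv_lhs => rw [shuffle]
  refine Finset.sum_congr rfl fun K _ => ?_
  dsimp only
  have hK : K.1.card = n₁ + n₂ := (mem_powersetCard.mp K.2).2
  rw [rename_shuffle d n₁ n₂ _ _ (K.1.orderEmbOfFin hK).strictMono K.1
    (image_univ_orderEmbOfFin hK) f₁ f₂, Finset.sum_mul, Finset.sum_mul]
  refine Finset.sum_congr rfl fun A _ => ?_
  simp only [pf]


set_option maxHeartbeats 1600000 in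
lemma rhs_expand (d n₁ n₂ n₃ : ℕ)
    (f₁ : MvPolynomial (Fin n₁) (Polynomial ℚ)) (f₂ : MvPolynomial (Fin n₂) (Polynomial ℚ))
    (f₃ : MvPolynomial (Fin n₃) (Polynomial ℚ)) :
    rename (Fin.cast (Nat.add_assoc n₁ n₂ n₃).symm)
        (shuffle d n₁ (n₂ + n₃) f₁ (shuffle d n₂ n₃ f₂ f₃))
      = ∑ A ∈ ((univ : Finset (Fin (n₁ + n₂ + n₃))).powersetCard n₁).attach,
          ∑ B ∈ ((univ \ A.1).powersetCard n₂).attach,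
            have hA : A.1.card = n₁ := (mem_powersetCard.mp A.2).2
            have hB : B.1.card = n₂ := (mem_powersetCard.mp B.2).2
            have hAc : (univ \ A.1).card = n₂ + n₃ := by
              rw [card_sdiff_of_subset (subset_univ _), hA]
              simp only [card_univ, Fintype.card_fin]
              omega
            have hC : ((univ \ A.1) \ B.1).card = n₃ := by
              rw [card_sdiff_of_subset (mem_powersetCard.mp B.2).1, hAc, hB]; omega
            rename (⇑(A.1.orderEmbOfFin hA)) f₁ *
                (rename (⇑(B.1.orderEmbOfFin hB)) f₂ *
                  rename (⇑(((univ \ A.1) \ B.1).orderEmbOfFin hC)) f₃ *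
                  ∏ j ∈ (univ \ A.1) \ B.1, ∏ i ∈ B.1, pf d j i) *
              ∏ j ∈ univ \ A.1, ∏ i ∈ A.1, pf d j i := by
  have hcast : StrictMono (Fin.cast (Nat.add_assoc n₁ n₂ n₃).symm) := fun a b h => h
  have himg : (univ : Finset (Fin (n₁ + (n₂ + n₃)))).image
      (Fin.cast (Nat.add_assoc n₁ n₂ n₃).symm) = univ := by
    apply Finset.image_univ_of_surjective
    intro y
    exact ⟨Fin.cast (Nat.add_assoc n₁ n₂ n₃) y, rfl⟩
  rw [rename_shuffle d n₁ (n₂ + n₃) (n₁ + n₂ + n₃) _ hcast univ himg f₁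
    (shuffle d n₂ n₃ f₂ f₃)]
  refine Finset.sum_congr rfl fun A _ => ?_
  dsimp only
  have hAc : (univ \ A.1).card = n₂ + n₃ := by
    rw [card_sdiff_of_subset (subset_univ _), (mem_powersetCard.mp A.2).2]
    simp only [card_univ, Fintype.card_fin]
    omega
  rw [rename_shuffle d n₂ n₃ _ _ ((univ \ A.1).orderEmbOfFin hAc).strictMono (univ \ A.1)
    (image_univ_orderEmbOfFin hAc) f₂ f₃, Finset.mul_sum, Finset.sum_mul]


lemma sig_ext {α : Type*} {s : Finset α} {t : α → Finset α}
    (p q : Σ K : {x // x ∈ s}, {y // y ∈ t K.1}) (h1 : p.1.1 = q.1.1) (h2 : p.2.1 = q.2.1) :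
    p = q := by
  obtain ⟨⟨K, hK⟩, ⟨A, hA⟩⟩ := p
  obtain ⟨⟨K', hK'⟩, ⟨A', hA'⟩⟩ := q
  dsimp at h1 h2
  subst h1; subst h2; rfl

set_option maxHeartbeats 1600000 in
/-- The shuffle multiplication of `ℋ^d_q` is associative (the identification
`Fin ((n₁+n₂)+n₃) = Fin (n₁+(n₂+n₃))` is realised by `Fin.cast`). -/
theorem shuffle_assoc (d n₁ n₂ n₃ : ℕ) (hd : 0 < d)
    (f₁ : MvPolynomial (Fin n₁) (Polynomial ℚ)) (f₂ : MvPolynomial (Fin n₂) (Polynomial ℚ))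
    (f₃ : MvPolynomial (Fin n₃) (Polynomial ℚ))
    (h₁ : f₁.IsSymmetric) (h₂ : f₂.IsSymmetric) (h₃ : f₃.IsSymmetric) :
    shuffle d (n₁ + n₂) n₃ (shuffle d n₁ n₂ f₁ f₂) f₃
      = rename (Fin.cast (Nat.add_assoc n₁ n₂ n₃).symm)
          (shuffle d n₁ (n₂ + n₃) f₁ (shuffle d n₂ n₃ f₂ f₃)) := by
  rw [lhs_expand, rhs_expand, Finset.sum_sigma', Finset.sum_sigma']
  have hmem1 : ∀ p : Σ K : {x // x ∈ (univ : Finset (Fin (n₁ + n₂ + n₃))).powersetCard (n₁ + n₂)},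
      {y // y ∈ K.1.powersetCard n₁},
      p.2.1 ∈ (univ : Finset (Fin (n₁ + n₂ + n₃))).powersetCard n₁ :=
    fun p => mem_powersetCard.mpr ⟨subset_univ _, (mem_powersetCard.mp p.2.2).2⟩
  have hmem2 : ∀ p : Σ K : {x // x ∈ (univ : Finset (Fin (n₁ + n₂ + n₃))).powersetCard (n₁ + n₂)},
      {y // y ∈ K.1.powersetCard n₁},
      p.1.1 \ p.2.1 ∈ (univ \ p.2.1).powersetCard n₂ := by
    intro p
    refine mem_powersetCard.mpr ⟨sdiff_subset_sdiff (subset_univ _) (Finset.Subset.refl _), ?_⟩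
    rw [card_sdiff_of_subset (mem_powersetCard.mp p.2.2).1, (mem_powersetCard.mp p.1.2).2,
      (mem_powersetCard.mp p.2.2).2]
    omega
  have hdisj : ∀ q : Σ A : {x // x ∈ (univ : Finset (Fin (n₁ + n₂ + n₃))).powersetCard n₁},
      {y // y ∈ (univ \ A.1).powersetCard n₂}, Disjoint q.1.1 q.2.1 := by
    intro q
    have := (mem_powersetCard.mp q.2.2).1
    exact Finset.disjoint_left.mpr fun x hx hx' => (mem_sdiff.mp (this hx')).2 hx
  have hmem3 : ∀ q : Σ A : {x // x ∈ (univ : Finset (Fin (n₁ + n₂ + n₃))).powersetCard n₁},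
      {y // y ∈ (univ \ A.1).powersetCard n₂},
      q.1.1 ∪ q.2.1 ∈ (univ : Finset (Fin (n₁ + n₂ + n₃))).powersetCard (n₁ + n₂) := by
    intro q
    refine mem_powersetCard.mpr ⟨subset_univ _, ?_⟩
    rw [card_union_of_disjoint (hdisj q), (mem_powersetCard.mp q.1.2).2,
      (mem_powersetCard.mp q.2.2).2]
  have hmem4 : ∀ q : Σ A : {x // x ∈ (univ : Finset (Fin (n₁ + n₂ + n₃))).powersetCard n₁},
      {y // y ∈ (univ \ A.1).powersetCard n₂},
      q.1.1 ∈ (q.1.1 ∪ q.2.1).powersetCard n₁ :=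
    fun q => mem_powersetCard.mpr ⟨Finset.subset_union_left, (mem_powersetCard.mp q.1.2).2⟩
  refine Finset.sum_bij'
    (i := fun p _ => ⟨⟨p.2.1, hmem1 p⟩, ⟨p.1.1 \ p.2.1, hmem2 p⟩⟩)
    (j := fun q _ => ⟨⟨q.1.1 ∪ q.2.1, hmem3 q⟩, ⟨q.1.1, hmem4 q⟩⟩)
    (fun p _ => Finset.mem_sigma.mpr ⟨mem_attach _ _, mem_attach _ _⟩)
    (fun q _ => Finset.mem_sigma.mpr ⟨mem_attach _ _, mem_attach _ _⟩)
    ?_ ?_ ?_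
  · intro p _
    refine sig_ext (t := fun x => powersetCard n₁ x) _ _ ?_ ?_
    · exact Finset.union_sdiff_of_subset (mem_powersetCard.mp p.2.2).1
    · rfl
  · intro q _
    refine sig_ext (t := fun x => powersetCard n₂ (univ \ x)) _ _ ?_ ?_
    · rfl
    · exact Finset.union_sdiff_cancel_left (hdisj q)
  · intro p _
    dsimp only
    obtain ⟨⟨K, hKm⟩, ⟨A, hAm⟩⟩ := p
    dsimp only at *
    have hAK : A ⊆ K := (mem_powersetCard.mp hAm).1
    have e1 : (univ \ A) \ (K \ A) = Kᶜ := by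
      ext x
      have hx := @hAK x
      simp only [mem_sdiff, mem_compl, mem_univ, true_and, not_and, not_not]
      tauto
    have hsub : K \ A ⊆ univ \ A := sdiff_subset_sdiff (subset_univ _) (Finset.Subset.refl _)
    have hK : K.card = n₁ + n₂ := (mem_powersetCard.mp hKm).2
    have hCcard : (Kᶜ).card = n₃ := by
      rw [card_compl, hK]
      simp only [Fintype.card_fin]
      omega
    have hC'card : ((univ \ A) \ (K \ A)).card = n₃ := by rw [e1]; exact hCcard
    rw [rename_orderEmbOfFin_congr e1 hC'card hCcard f₃, ← Finset.prod_sdiff hsub, e1]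
    have e4 : ∀ j, ∏ i ∈ K, pf d j i = (∏ i ∈ K \ A, pf d j i) * ∏ i ∈ A, pf d j i :=
      fun j => (Finset.prod_sdiff hAK).symm
    rw [Finset.prod_congr rfl (fun j _ => e4 j), Finset.prod_mul_distrib]
    ring

end
end

section
/- For partitions λ, μ of the same length n, the product of the symmetrized monomial M_λ(x_1,...,x_n) = ∑_{σ∈S_n} x_{σ(1)}^{λ_1}···x_{σ(n)}^{λ_n} with the monomial symmetric polynomial m_μ(x_1,...,x_n) satisfies M_λ · m_μ = ∑_{w ∈ S_μ} M_{λ+w}, where S_μ is the set of distinct rearrangements of μ and λ+w denotes componentwise addition. -/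
open MvPolynomial Finset

noncomputable section

/-- `M_λ(x_1,…,x_n) = ∑_{σ ∈ S_n} x_{σ(1)}^{λ_1} ⋯ x_{σ(n)}^{λ_n}`. -/
def Msym {n : ℕ} (lam : Fin n → ℕ) : MvPolynomial (Fin n) ℚ :=
  ∑ σ : Equiv.Perm (Fin n), ∏ i : Fin n, X (σ i) ^ lam i

/-- `S_μ`, the set of distinct rearrangements of the parts of `μ`. -/
def rearr {n : ℕ} (mu : Fin n → ℕ) : Finset (Fin n → ℕ) :=
  (Finset.univ : Finset (Equiv.Perm (Fin n))).image (fun σ : Equiv.Perm (Fin n) => mu ∘ ⇑σ)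

/-- The monomial symmetric polynomial `m_μ`: the sum of the distinct monomials
obtained by permuting the exponent vector `μ`. -/
def msym {n : ℕ} (mu : Fin n → ℕ) : MvPolynomial (Fin n) ℚ :=
  ∑ w ∈ rearr mu, ∏ i : Fin n, X i ^ w i

/-- `c(λ)`, the number of permutations stabilizing the vector `λ`. -/
def cstab {n : ℕ} (lam : Fin n → ℕ) : ℕ :=
  ((Finset.univ : Finset (Equiv.Perm (Fin n))).filter (fun σ : Equiv.Perm (Fin n) => lam ∘ ⇑σ = lam)).card

end

lemma mem_rearr_comp {n : ℕ} (mu : Fin n → ℕ) (σ : Equiv.Perm (Fin n))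
    {w : Fin n → ℕ} (hw : w ∈ rearr mu) : w ∘ ⇑σ ∈ rearr mu := by
  simp only [rearr, Finset.mem_image] at *
  obtain ⟨τ, -, rfl⟩ := hw
  exact ⟨σ.trans τ, Finset.mem_univ _, by ext i; simp⟩

/-- Proposition 4.1: for partitions `λ, μ` of length `n`,
`M_λ ⬝ m_μ = ∑_{w ∈ S_μ} M_{λ+w}`. -/
theorem Msym_mul_msym {n : ℕ} (lam mu : Fin n → ℕ) (hlam : Monotone lam)
    (hmu : Monotone mu) :
    Msym lam * msym mu = ∑ w ∈ rearr mu, Msym (lam + w) := by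
  unfold Msym msym
  rw [Finset.sum_mul_sum]
  have h1 : ∀ σ : Equiv.Perm (Fin n),
      ∑ w ∈ rearr mu, (∏ i : Fin n, X (σ i) ^ lam i) * ∏ i : Fin n, (X i : MvPolynomial (Fin n) ℚ) ^ w i
        = ∑ w ∈ rearr mu, ∏ i : Fin n, X (σ i) ^ (lam i + w i) := by
    intro σ
    refine Finset.sum_nbij' (fun w => w ∘ ⇑σ) (fun w => w ∘ ⇑σ⁻¹)
      (fun w hw => mem_rearr_comp mu σ hw) (fun w hw => mem_rearr_comp mu σ⁻¹ hw)
      (fun w _ => by ext i; simp) (fun w _ => by ext i; simp) (fun w hw => ?_)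
    simp only [pow_add, Finset.prod_mul_distrib, Function.comp_apply]
    congr 1
    exact (Equiv.prod_comp σ (fun j => (X j : MvPolynomial (Fin n) ℚ) ^ w j)).symm
  rw [Finset.sum_congr rfl (fun σ _ => h1 σ), Finset.sum_comm]
  refine Finset.sum_congr rfl fun w _ => Finset.sum_congr rfl fun σ _ => ?_
  simp [Pi.add_apply]
end

section
/- For partitions λ, μ of length n, the monomial symmetric polynomials satisfy m_λ(x_1,...,x_n) · m_μ(x_1,...,x_n) = ∑_{w ∈ S_μ} (c(λ+w)/c(λ)) · m_{(λ+w)_≤}(x_1,...,x_n), where S_μ is the set of distinct rearrangements of μ, c(ν) is the number of permutations in S_n fixing the vector ν, and (λ+w)_≤ is the weakly increasing rearrangement of λ+w. -/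
open MvPolynomial Finset

noncomputable section Aux

def mymono {n : ℕ} (a : Fin n → ℕ) : MvPolynomial (Fin n) ℚ := ∏ i, X i ^ a i

lemma mymono_mul {n : ℕ} (a b : Fin n → ℕ) : mymono a * mymono b = mymono (a + b) := by
  simp [mymono, ← Finset.prod_mul_distrib, pow_add]

lemma msym_eq {n : ℕ} (f : Fin n → ℕ) : msym f = ∑ w ∈ rearr f, mymono w := rfl

lemma prod_perm {n : ℕ} (f : Fin n → ℕ) (σ : Equiv.Perm (Fin n)) :
    (∏ i, (X (σ i) : MvPolynomial (Fin n) ℚ) ^ f i) = mymono (f ∘ ⇑σ⁻¹) := by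
  rw [mymono]
  exact Fintype.prod_equiv σ _ _ (fun i => by simp)

lemma Msym_eq {n : ℕ} (f : Fin n → ℕ) :
    Msym f = ∑ σ : Equiv.Perm (Fin n), mymono (f ∘ ⇑σ) := by
  rw [Msym, Finset.sum_congr rfl (fun σ _ => prod_perm f σ)]
  exact Fintype.sum_equiv (Equiv.inv (Equiv.Perm (Fin n))) _ _ (fun σ => rfl)

lemma comp_mem_rearr {n : ℕ} {mu v : Fin n → ℕ} (hv : v ∈ rearr mu)
    (σ : Equiv.Perm (Fin n)) : v ∘ ⇑σ ∈ rearr mu := by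
  simp only [rearr, Finset.mem_image, Finset.mem_univ, true_and] at hv ⊢
  obtain ⟨τ, rfl⟩ := hv
  exact ⟨τ * σ, rfl⟩

lemma fiber_card {n : ℕ} (g : Fin n → ℕ) (τ : Equiv.Perm (Fin n)) :
    ((Finset.univ : Finset (Equiv.Perm (Fin n))).filter
        (fun σ : Equiv.Perm (Fin n) => g ∘ ⇑σ = g ∘ ⇑τ)).card = cstab g := by
  rw [cstab]
  apply Finset.card_bij' (fun σ _ => σ * τ⁻¹) (fun ρ _ => ρ * τ)
  · intro σ hσ
    simp only [Finset.mem_filter, Finset.mem_univ, true_and] at hσ ⊢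
    have : g ∘ ⇑(σ * τ⁻¹) = (g ∘ ⇑σ) ∘ ⇑τ⁻¹ := rfl
    rw [this, hσ]
    ext i; simp
  · intro ρ hρ
    simp only [Finset.mem_filter, Finset.mem_univ, true_and] at hρ ⊢
    have : g ∘ ⇑(ρ * τ) = (g ∘ ⇑ρ) ∘ ⇑τ := rfl
    rw [this, hρ]
  · intro σ _; group
  · intro ρ _; group

lemma Msym_eq_smul {n : ℕ} (f : Fin n → ℕ) : Msym f = (cstab f : ℚ) • msym f := by
  rw [Msym_eq, msym_eq, Finset.smul_sum,
    Finset.sum_comp mymono (fun σ : Equiv.Perm (Fin n) => f ∘ ⇑σ)]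
  rw [rearr]
  refine Finset.sum_congr rfl ?_
  intro w hw
  simp only [Finset.mem_image, Finset.mem_univ, true_and] at hw
  obtain ⟨τ, rfl⟩ := hw
  rw [fiber_card f τ, Nat.cast_smul_eq_nsmul]

lemma rearr_comp {n : ℕ} (f : Fin n → ℕ) (σ : Equiv.Perm (Fin n)) :
    rearr (f ∘ ⇑σ) = rearr f := by
  unfold rearr
  ext w
  simp only [Finset.mem_image, Finset.mem_univ, true_and]
  constructor
  · rintro ⟨τ, rfl⟩; exact ⟨σ * τ, rfl⟩
  · rintro ⟨τ, rfl⟩; exact ⟨σ⁻¹ * τ, by funext i; simp⟩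

lemma msym_comp {n : ℕ} (f : Fin n → ℕ) (σ : Equiv.Perm (Fin n)) :
    msym (f ∘ ⇑σ) = msym f := by
  rw [msym_eq, msym_eq, rearr_comp]

lemma cstab_pos {n : ℕ} (f : Fin n → ℕ) : 0 < cstab f :=
  Finset.card_pos.2 ⟨1, by simp⟩

end Aux

/-- Corollary 4.3: for partitions `λ, μ` of length `n`,
`m_λ ⬝ m_μ = ∑_{w ∈ S_μ} (c(λ+w)/c(λ)) ⬝ m_{(λ+w)_≤}`, where `(λ+w)_≤` is the
weakly increasing rearrangement of `λ+w`. -/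
theorem msym_mul_msym {n : ℕ} (lam mu : Fin n → ℕ) (hlam : Monotone lam)
    (hmu : Monotone mu) :
    msym lam * msym mu
      = ∑ w ∈ rearr mu,
          ((cstab (lam + w) : ℚ) / (cstab lam : ℚ)) •
            msym ((lam + w) ∘ Tuple.sort (lam + w)) := by
  have hc : (cstab lam : ℚ) ≠ 0 := Nat.cast_ne_zero.2 (cstab_pos lam).ne'
  have key : Msym lam * msym mu = ∑ w ∈ rearr mu, Msym (lam + w) := by
    rw [Msym_eq, Finset.sum_mul]
    have step : ∀ σ : Equiv.Perm (Fin n),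
        mymono (lam ∘ ⇑σ) * msym mu = ∑ v ∈ rearr mu, mymono ((lam + v) ∘ ⇑σ) := by
      intro σ
      rw [msym_eq, Finset.mul_sum]
      refine Finset.sum_nbij' (fun v => v ∘ ⇑σ⁻¹) (fun v => v ∘ ⇑σ) ?_ ?_ ?_ ?_ ?_
      · intro v hv; exact comp_mem_rearr hv σ⁻¹
      · intro v hv; exact comp_mem_rearr hv σ
      · intro v _; ext i; simp
      · intro v _; ext i; simp
      · intro v _
        rw [mymono_mul]
        congr 1
        ext i
        simp [Pi.add_apply]
    rw [Finset.sum_congr rfl (fun σ _ => step σ), Finset.sum_comm]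
    exact Finset.sum_congr rfl (fun v _ => (Msym_eq (lam + v)).symm)
  have hlam' : msym lam = (cstab lam : ℚ)⁻¹ • Msym lam := by
    rw [Msym_eq_smul, smul_smul, inv_mul_cancel₀ hc, one_smul]
  calc msym lam * msym mu = (cstab lam : ℚ)⁻¹ • (Msym lam * msym mu) := by
        rw [hlam', smul_mul_assoc]
    _ = ∑ w ∈ rearr mu, (cstab lam : ℚ)⁻¹ • Msym (lam + w) := by
        rw [key, Finset.smul_sum]
    _ = _ := by
        refine Finset.sum_congr rfl (fun w _ => ?_)
        rw [Msym_eq_smul, smul_smul, msym_comp (lam + w) (Tuple.sort (lam + w)),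
          div_eq_inv_mul]
end

section
/- For d = 2, the coefficient c_{m,n}^{a,b} in the expansion of ∏_{s=m+1}^{m+n} ∏_{t=1}^{m} (x_s − q x_t) equals ∑_G (−q)^{m(G)}, summed over all orientations G of the complete bipartite graph K_{m,n} on parts U = {u_1,...,u_m}, V = {v_1,...,v_n}, such that for each i the in-degree of u_i equals a_i and for each j the in-degree of v_j equals b_j; here m(G) = ∑_i (in-degree of u_i). -/
open MvPolynomial Finset

noncomputable section

/-- The kernel polynomial for `d = 2`:
`g_{m,n} = ∏_{s=m+1}^{m+n} ∏_{t=1}^{m} (x_s − q x_t)`, variables indexed by `ℕ`. -/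
def gPoly2 (m n : ℕ) : MvPolynomial ℕ (Polynomial ℚ) :=
  ∏ s ∈ Finset.Ico m (m + n), ∏ t ∈ Finset.range m, (X s - C qv * X t)

/-- The coefficient `c_{m,n}^{a,b}` of `x^{(a,b)}` in `g_{m,n}` (for `d = 2`). -/
def cf2 (m n : ℕ) (a : Fin m → ℕ) (b : Fin n → ℕ) : Polynomial ℚ :=
  MvPolynomial.coeff (expo a b) (gPoly2 m n)

/-- An orientation of the complete bipartite graph `K_{m,n}` is a function on the
edges `(i,j)`; the value `true` means the edge is directed towards `u_i`. -/
def inDegU {m n : ℕ} (G : Fin m × Fin n → Bool) (i : Fin m) : ℕ :=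
  (Finset.univ.filter fun j : Fin n => G (i, j) = true).card

/-- The in-degree of `v_j`: the number of edges directed towards `v_j`. -/
def inDegV {m n : ℕ} (G : Fin m × Fin n → Bool) (j : Fin n) : ℕ :=
  (Finset.univ.filter fun i : Fin m => G (i, j) = false).card

/-- `m(G) = ∑_i (in-degree of u_i)`. -/
def mG {m n : ℕ} (G : Fin m × Fin n → Bool) : ℕ := ∑ i : Fin m, inDegU G i

-- auxiliary development

/-- vertex picked up by edge `p` under orientation `G` -/
def vtx {m n : ℕ} (G : Fin m × Fin n → Bool) (p : Fin m × Fin n) : ℕ :=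
  if G p then (p.1 : ℕ) else m + (p.2 : ℕ)

def expoG {m n : ℕ} (G : Fin m × Fin n → Bool) : ℕ →₀ ℕ :=
  ∑ p : Fin m × Fin n, Finsupp.single (vtx G p) 1

lemma prod_monomial' {α σ R : Type*} [CommSemiring R] (s : Finset α)
    (d : α → σ →₀ ℕ) (c : α → R) :
    ∏ p ∈ s, monomial (d p) (c p) = monomial (∑ p ∈ s, d p) (∏ p ∈ s, c p) := by
  classical
  induction s using Finset.cons_induction with
  | empty => simp
  | cons a s h ih => rw [Finset.prod_cons, Finset.sum_cons, Finset.prod_cons, ih, monomial_mul]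

lemma mG_card {m n : ℕ} (G : Fin m × Fin n → Bool) :
    mG G = (Finset.univ.filter fun p : Fin m × Fin n => G p = true).card := by
  simp only [mG, inDegU, Finset.card_filter, Fintype.sum_prod_type]

lemma gPoly2_eq (m n : ℕ) :
    gPoly2 m n = ∑ G : Fin m × Fin n → Bool,
      monomial (expoG G) ((-qv) ^ mG G) := by
  have h1 : gPoly2 m n = ∏ p : Fin m × Fin n,
      (X (m + (p.2 : ℕ)) - C qv * X (p.1 : ℕ)) := by
    rw [gPoly2, Finset.prod_Ico_eq_prod_range]
    simp only [Nat.add_sub_cancel_left]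
    rw [Finset.prod_comm, Fintype.prod_prod_type]
    rw [← Fin.prod_univ_eq_prod_range
      (fun t => ∏ x ∈ Finset.range n, (X (m + x) - C qv * X t)) m]
    exact Finset.prod_congr rfl fun i _ =>
      (Fin.prod_univ_eq_prod_range (fun x => (X (m + x) - C qv * X (i:ℕ))) n).symm
  have h2 : ∀ p : Fin m × Fin n,
      (X (m + (p.2:ℕ)) - C qv * X (p.1:ℕ) : MvPolynomial ℕ (Polynomial ℚ))
      = ∑ c : Bool, monomial (Finsupp.single (if c then (p.1:ℕ) else m + (p.2:ℕ)) 1)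
          (if c then -qv else 1) := by
    intro p
    rw [Fintype.sum_bool]
    simp only [Bool.false_eq_true, eq_self_iff_true, if_true, if_false]
    rw [sub_eq_neg_add]
    rw [← C_mul_X_eq_monomial, map_neg, ← C_mul_X_eq_monomial (a := (1 : Polynomial ℚ)),
      map_one, one_mul]
    ring
  rw [h1]
  calc ∏ p : Fin m × Fin n, (X (m + (p.2:ℕ)) - C qv * X (p.1:ℕ))
      = ∏ p : Fin m × Fin n, ∑ c : Bool,
          monomial (Finsupp.single (if c then (p.1:ℕ) else m + (p.2:ℕ)) 1)
            (if c then (-qv) else 1) := Finset.prod_congr rfl fun p _ => h2 p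
    _ = ∑ G : Fin m × Fin n → Bool, ∏ p : Fin m × Fin n,
          monomial (Finsupp.single (if G p then (p.1:ℕ) else m + (p.2:ℕ)) 1)
            (if G p then (-qv) else 1) := Fintype.prod_sum _
    _ = ∑ G : Fin m × Fin n → Bool, monomial (expoG G) ((-qv) ^ mG G) := by
        refine Finset.sum_congr rfl fun G _ => ?_
        rw [prod_monomial']
        have hc : (∏ p : Fin m × Fin n, if G p then (-qv) else 1) = (-qv) ^ mG G := by
          rw [Finset.prod_ite, Finset.prod_const, Finset.prod_const, one_pow, mul_one, mG_card]
        rw [hc]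
        rfl

lemma vtx_eq_iff_U {m n : ℕ} (G : Fin m × Fin n → Bool) (p : Fin m × Fin n) (i : Fin m) :
    vtx G p = (i : ℕ) ↔ G p = true ∧ p.1 = i := by
  unfold vtx
  constructor
  · intro h
    split at h
    · exact ⟨by assumption, Fin.ext h⟩
    · have := i.isLt; omega
  · rintro ⟨h1, h2⟩
    rw [if_pos h1, h2]

lemma vtx_eq_iff_V {m n : ℕ} (G : Fin m × Fin n → Bool) (p : Fin m × Fin n) (j : Fin n) :
    vtx G p = m + (j : ℕ) ↔ G p = false ∧ p.2 = j := by
  unfold vtx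
  constructor
  · intro h
    split at h
    · have := p.1.isLt; omega
    · exact ⟨by simpa using ‹¬ G p = true›, Fin.ext (by omega)⟩
  · rintro ⟨h1, h2⟩
    rw [if_neg (by simp [h1]), h2]

lemma expoG_apply {m n : ℕ} (G : Fin m × Fin n → Bool) (k : ℕ) :
    expoG G k = (Finset.univ.filter fun p : Fin m × Fin n => vtx G p = k).card := by
  rw [expoG, Finset.sum_apply', Finset.card_filter]
  simp [Finsupp.single_apply]

lemma expoG_apply_U {m n : ℕ} (G : Fin m × Fin n → Bool) (i : Fin m) :
    expoG G (i : ℕ) = inDegU G i := by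
  rw [expoG_apply, inDegU]
  refine Finset.card_bij' (fun p _ => p.2) (fun j _ => (i, j)) ?_ ?_ ?_ ?_
  · intro p hp
    simp only [Finset.mem_filter, Finset.mem_univ, true_and, vtx_eq_iff_U] at hp ⊢
    obtain ⟨h1, h2⟩ := hp
    rw [← h2]
    simpa using h1
  · intro j hj
    simp only [Finset.mem_filter, Finset.mem_univ, true_and, vtx_eq_iff_U] at hj ⊢
    exact ⟨hj, trivial⟩
  · intro p hp
    simp only [Finset.mem_filter, Finset.mem_univ, true_and, vtx_eq_iff_U] at hp
    exact Prod.ext hp.2.symm rfl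
  · intro j _
    rfl

lemma expoG_apply_V {m n : ℕ} (G : Fin m × Fin n → Bool) (j : Fin n) :
    expoG G (m + (j : ℕ)) = inDegV G j := by
  rw [expoG_apply, inDegV]
  refine Finset.card_bij' (fun p _ => p.1) (fun i _ => (i, j)) ?_ ?_ ?_ ?_
  · intro p hp
    simp only [Finset.mem_filter, Finset.mem_univ, true_and, vtx_eq_iff_V] at hp ⊢
    obtain ⟨h1, h2⟩ := hp
    rw [← h2]
    simpa using h1
  · intro i hi
    simp only [Finset.mem_filter, Finset.mem_univ, true_and, vtx_eq_iff_V] at hi ⊢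
    exact ⟨hi, trivial⟩
  · intro p hp
    simp only [Finset.mem_filter, Finset.mem_univ, true_and, vtx_eq_iff_V] at hp
    exact Prod.ext rfl hp.2.symm
  · intro i _
    rfl

lemma expoG_apply_big {m n : ℕ} (G : Fin m × Fin n → Bool) (k : ℕ) (hk : m + n ≤ k) :
    expoG G k = 0 := by
  rw [expoG_apply]
  convert Finset.card_empty
  rw [Finset.filter_eq_empty_iff]
  intro p _
  unfold vtx
  split
  · have := p.1.isLt; omega
  · have := p.2.isLt; omega

lemma expo_apply_U {m n : ℕ} (a : Fin m → ℕ) (b : Fin n → ℕ) (i : Fin m) :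
    expo a b (i : ℕ) = a i := by
  rw [expo, Finsupp.add_apply, Finset.sum_apply', Finset.sum_apply']
  rw [Finset.sum_eq_single i (fun i' _ hne => by
      rw [Finsupp.single_apply, if_neg (fun h => hne (Fin.ext h))])
    (by simp)]
  rw [Finsupp.single_apply, if_pos rfl]
  rw [Finset.sum_eq_zero (fun j _ => by
      rw [Finsupp.single_apply, if_neg (by have := i.isLt; omega)]), add_zero]

lemma expo_apply_V {m n : ℕ} (a : Fin m → ℕ) (b : Fin n → ℕ) (j : Fin n) :
    expo a b (m + (j : ℕ)) = b j := by
  rw [expo, Finsupp.add_apply, Finset.sum_apply', Finset.sum_apply']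
  rw [Finset.sum_eq_zero (fun i _ => by
      rw [Finsupp.single_apply, if_neg (by have := i.isLt; omega)])]
  rw [Finset.sum_eq_single j (fun j' _ hne => by
      rw [Finsupp.single_apply, if_neg (fun h => hne (Fin.ext (by omega)))])
    (by simp)]
  rw [Finsupp.single_apply, if_pos rfl, zero_add]

lemma expo_apply_big {m n : ℕ} (a : Fin m → ℕ) (b : Fin n → ℕ) (k : ℕ) (hk : m + n ≤ k) :
    expo a b k = 0 := by
  rw [expo, Finsupp.add_apply, Finset.sum_apply', Finset.sum_apply']
  rw [Finset.sum_eq_zero (fun i _ => by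
      rw [Finsupp.single_apply, if_neg (by have := i.isLt; omega)])]
  rw [Finset.sum_eq_zero (fun j _ => by
      rw [Finsupp.single_apply, if_neg (by have := j.isLt; omega)]), add_zero]

lemma expoG_eq_iff {m n : ℕ} (G : Fin m × Fin n → Bool) (a : Fin m → ℕ) (b : Fin n → ℕ) :
    expoG G = expo a b ↔ (∀ i, inDegU G i = a i) ∧ ∀ j, inDegV G j = b j := by
  constructor
  · intro h
    constructor
    · intro i
      rw [← expoG_apply_U G i, h, expo_apply_U]
    · intro j
      rw [← expoG_apply_V G j, h, expo_apply_V]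
  · rintro ⟨hU, hV⟩
    ext k
    rcases lt_or_ge k m with hk | hk
    · have : k = ((⟨k, hk⟩ : Fin m) : ℕ) := rfl
      rw [this, expoG_apply_U, expo_apply_U, hU]
    · rcases lt_or_ge k (m + n) with hk2 | hk2
      · have : k = m + ((⟨k - m, by omega⟩ : Fin n) : ℕ) := by simp; omega
        rw [this, expoG_apply_V, expo_apply_V, hV]
      · rw [expoG_apply_big G k hk2, expo_apply_big a b k hk2]


/-- For `d = 2`, `c_{m,n}^{a,b} = ∑_G (−q)^{m(G)}`, the sum over all orientations
`G` of `K_{m,n}` in which each `u_i` has in-degree `a_i` and each `v_j` has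
in-degree `b_j`. -/
theorem cf2_eq_sum_orientations (m n : ℕ) (a : Fin m → ℕ) (b : Fin n → ℕ) :
    cf2 m n a b
      = ∑ G ∈ (Finset.univ : Finset (Fin m × Fin n → Bool)).filter
          (fun G => (∀ i, inDegU G i = a i) ∧ ∀ j, inDegV G j = b j),
          (-qv) ^ mG G := by
  rw [cf2, gPoly2_eq, MvPolynomial.coeff_sum, Finset.sum_filter]
  refine Finset.sum_congr rfl fun G _ => ?_
  rw [MvPolynomial.coeff_monomial]
  exact if_congr (expoG_eq_iff G a b) rfl rfl

end
end
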